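/- arXiv:2501.13626 — 2 statements merged into one kernel-verified Lean document; each statement's English description precedes it below -/
import Mathlib

section
/- Let (a_n) be an arithmetic sequence such that for each m ∈ ℕ, lim_{n→∞} (Σ_{i=0}^{m-1} (b_{n-i} - 1)) / (Σ_{i=1}^n (b_i - 1)) = 0. Then (a_n) is weakly density lifting invariant (weakly dli). -/
open Filter Topology Set

noncomputable section

/-- The sequence of ratios `b n = a n / a (n-1)` of an arithmetic sequence. -/
def ratios (a : ℕ → ℕ) (n : ℕ) : ℕ := a n / a (n - 1)

/-- An arithmetic sequence: `a 0 = 1`, strictly increasing, each term divides the next. -/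
def IsArithSeq (a : ℕ → ℕ) : Prop :=
  a 0 = 1 ∧ (∀ n, a n < a (n + 1)) ∧ (∀ n, a n ∣ a (n + 1))

/-- The indices `n_k` with `a k = d (n k)`: `n 0 = 1`, `n (k+1) = n k + (b (k+1) - 1)`. -/
def nseq (a : ℕ → ℕ) : ℕ → ℕ
  | 0 => 1
  | k + 1 => nseq a k + (ratios a (k + 1) - 1)

/-- The lifting function `L(A) = ⋃_{k ∈ A} [n_{k-1}, n_k - 1]`. -/
def liftSet (a : ℕ → ℕ) (A : Set ℕ) : Set ℕ :=
  ⋃ k ∈ A, Set.Icc (nseq a (k - 1)) (nseq a k - 1)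

/-- `A ⊆ ℕ` has natural density `δ`. -/
def HasDensity (A : Set ℕ) (δ : ℝ) : Prop :=
  Tendsto (fun n : ℕ => ((A ∩ Set.Iio n).ncard : ℝ) / n) atTop (𝓝 δ)

/-- The upper natural density of `A ⊆ ℕ`. -/
def upperDensity (A : Set ℕ) : ℝ :=
  limsup (fun n : ℕ => ((A ∩ Set.Iio n).ncard : ℝ) / n) atTop

/-- The sequence `(d n)`: the increasing enumeration of `{r * a k : k ≥ 0, 1 ≤ r < b (k+1)}`. -/
def dSeq (a : ℕ → ℕ) : ℕ → ℕ :=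
  Nat.nth (fun m => ∃ k r : ℕ, 1 ≤ r ∧ r < ratios a (k + 1) ∧ m = r * a k)

/-- The characterized subgroup `t_{(u n)}(𝕋)`. -/
def charSub (u : ℕ → ℤ) : Set (AddCircle (1 : ℝ)) :=
  {x | Tendsto (fun n => u n • x) atTop (𝓝 0)}

/-- The statistically characterized subgroup `t^s_{(u n)}(𝕋)`. -/
def statChar (u : ℕ → ℤ) : Set (AddCircle (1 : ℝ)) :=
  {x | ∀ ε : ℝ, 0 < ε → HasDensity {n : ℕ | ε ≤ ‖u n • x‖} 0}

/-- Density lifting invariant. -/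
def Dli (a : ℕ → ℕ) : Prop :=
  ∀ A : Set ℕ, A.Infinite → HasDensity A 0 → HasDensity (liftSet a A) 0

/-- Weakly density lifting invariant. -/
def WeaklyDli (a : ℕ → ℕ) : Prop :=
  ∃ A : Set ℕ, A.Infinite ∧ ∀ m : ℕ, HasDensity (liftSet a ((fun x => x - m) '' A)) 0

/-- Strongly non density lifting invariant. -/
def StronglyNonDli (a : ℕ → ℕ) : Prop :=
  ∀ A : Set ℕ, A.Infinite → 0 < upperDensity (liftSet a A)

/-! Take `A = {k₀ < k₁ < ⋯}` growing so fast that `2 ^ (j + 1) * n_{k_j} ≤ k_{j+1}`. For a shift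
`m`, `L(A - m)` is the union of the blocks `[n_{k_j - m - 1}, n_{k_j - m})` of lengths
`b_{k_j - m} - 1`. Count up to `N`, where `N` lies in the span of block `J + 1`: all earlier blocks
lie below `n_{k_J} < N / 2 ^ (J + 1)`, and `b_q - 1 = o(n_q)` makes block `J + 1` itself shorter
than `ε N`. -/

variable {a : ℕ → ℕ}

lemma IsArithSeq.pos (ha : IsArithSeq a) (n : ℕ) : 0 < a n := by
  induction n with
  | zero => simp [ha.1]
  | succ n ih => exact ih.trans (ha.2.1 n)

lemma IsArithSeq.two_le_ratios (ha : IsArithSeq a) {n : ℕ} (hn : 1 ≤ n) :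
    2 ≤ ratios a n := by
  obtain ⟨k, rfl⟩ := Nat.exists_eq_add_of_le' hn
  obtain ⟨c, hc⟩ := ha.2.2 k
  have hlt := ha.2.1 k
  have hk := ha.pos k
  rw [ratios, Nat.add_sub_cancel, hc, Nat.mul_div_cancel_left _ hk]
  by_contra! hc2
  interval_cases c <;> simp_all

lemma nseq_succ (a : ℕ → ℕ) (k : ℕ) :
    nseq a (k + 1) = nseq a k + (ratios a (k + 1) - 1) := rfl

lemma nseq_mono (a : ℕ → ℕ) : Monotone (nseq a) :=
  monotone_nat_of_le_succ fun k => by rw [nseq_succ]; omega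

lemma one_le_nseq (a : ℕ → ℕ) (k : ℕ) : 1 ≤ nseq a k :=
  nseq_mono a (Nat.zero_le k)

lemma nseq_eq_nseq_pred_add {q : ℕ} (hq : 1 ≤ q) :
    nseq a q = nseq a (q - 1) + (ratios a q - 1) := by
  obtain ⟨k, rfl⟩ := Nat.exists_eq_add_of_le' hq
  rfl

lemma IsArithSeq.lt_nseq (ha : IsArithSeq a) (k : ℕ) : k < nseq a k := by
  induction k with
  | zero => simp [nseq]
  | succ k ih =>
    have := ha.two_le_ratios (n := k + 1) (by omega)
    rw [nseq_succ]; omega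

lemma IsArithSeq.tendsto_nseq (ha : IsArithSeq a) : Tendsto (nseq a) atTop atTop :=
  tendsto_atTop_mono (fun k => (ha.lt_nseq k).le) tendsto_id

lemma IsArithSeq.sum_Icc_ratios_sub_one (ha : IsArithSeq a) (n : ℕ) :
    ∑ i ∈ Finset.Icc 1 n, ((ratios a i : ℝ) - 1) = nseq a n - 1 := by
  induction n with
  | zero => simp [nseq]
  | succ n ih =>
    have := ha.two_le_ratios (n := n + 1) (by omega)
    rw [Finset.sum_Icc_succ_top (by omega), ih, nseq_succ]
    push_cast [Nat.cast_sub (by omega : 1 ≤ ratios a (n + 1))]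
    ring

lemma IsArithSeq.eventually_ratios_sub_one_le (ha : IsArithSeq a)
    (hlim : Tendsto (fun q => ((ratios a q : ℝ) - 1) / ((nseq a q : ℝ) - 1)) atTop (𝓝 0))
    {ε : ℝ} (hε : 0 < ε) :
    ∀ᶠ q in atTop, ((ratios a q - 1 : ℕ) : ℝ) ≤ ε * nseq a (q - 1) := by
  set δ := min (ε / 2) (1 / 2)
  have hδ : 0 < δ := lt_min (half_pos hε) one_half_pos
  filter_upwards [hlim.eventually (gt_mem_nhds hδ), eventually_ge_atTop 1] with q hq hq1
  have hb : 2 ≤ ratios a q := ha.two_le_ratios hq1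
  have hb' : (2 : ℝ) ≤ ratios a q := by exact_mod_cast hb
  have hs : (1 : ℝ) ≤ nseq a (q - 1) := by exact_mod_cast one_le_nseq a (q - 1)
  have hcast : ((ratios a q - 1 : ℕ) : ℝ) = ratios a q - 1 := Nat.cast_pred (by omega)
  rw [nseq_eq_nseq_pred_add hq1, Nat.cast_add, hcast, div_lt_iff₀ (by linarith)] at hq
  rw [hcast]
  have : δ ≤ ε / 2 := min_le_left _ _
  have : δ ≤ 1 / 2 := min_le_right _ _
  nlinarith

lemma ncard_liftSet_inter_Iio_le {A : Set ℕ} {K q n : ℕ} (hq : 1 ≤ q)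
    (hA : ∀ x ∈ A, x ≤ K ∨ x = q ∨ n ≤ nseq a (x - 1)) :
    (liftSet a A ∩ Iio n).ncard ≤ nseq a K + (ratios a q - 1) := by
  have hsub : liftSet a A ∩ Iio n ⊆
      ↑(Finset.range (nseq a K) ∪ Finset.Icc (nseq a (q - 1)) (nseq a q - 1)) := by
    rintro y ⟨hy, hyn⟩
    obtain ⟨x, hx, hxy⟩ := mem_iUnion₂.mp hy
    have := one_le_nseq a x
    simp only [Finset.coe_union, Finset.coe_range, Finset.coe_Icc, mem_union, mem_Iio]
    rcases hA x hx with hxK | rfl | hnx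
    · exact .inl ((hxy.2.trans_lt (by omega)).trans_le (nseq_mono a hxK))
    · exact .inr hxy
    · exact absurd hyn (not_lt.mpr (hnx.trans hxy.1))
  calc (liftSet a A ∩ Iio n).ncard
      ≤ (Finset.range (nseq a K) ∪ Finset.Icc (nseq a (q - 1)) (nseq a q - 1)).card := by
        rw [← ncard_coe_finset]; exact ncard_le_ncard hsub (Finset.finite_toSet _)
    _ ≤ nseq a K + (ratios a q - 1) := by
        refine (Finset.card_union_le _ _).trans ?_
        have := one_le_nseq a (q - 1)
        rw [Finset.card_range, Nat.card_Icc, nseq_eq_nseq_pred_add hq]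
        omega

lemma Monotone.exists_lt_le_succ {f : ℕ → ℕ} (hf : Monotone f) (hf' : Tendsto f atTop atTop)
    {j₀ n : ℕ} (hn : f j₀ < n) : ∃ J, j₀ ≤ J ∧ f J < n ∧ n ≤ f (J + 1) := by
  classical
  have hex : ∃ i, n ≤ f i := (hf'.eventually_ge_atTop n).exists
  have hgt : j₀ < Nat.find hex := by
    by_contra! hle
    exact (Nat.find_spec hex).not_gt ((hf hle).trans_lt hn)
  obtain ⟨J, hJ⟩ := Nat.exists_eq_add_of_lt hgt
  refine ⟨j₀ + J, by omega, not_le.mp (Nat.find_min hex (by omega)), ?_⟩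
  convert Nat.find_spec hex using 2
  omega

lemma hasDensity_zero_of_eventually_le {S : Set ℕ}
    (h : ∀ ε > 0, ∀ᶠ n in atTop, ((S ∩ Iio n).ncard : ℝ) ≤ ε * n) : HasDensity S 0 := by
  refine tendsto_order.2 ⟨fun c hc => .of_forall fun n => hc.trans_le (by positivity),
    fun c hc => ?_⟩
  filter_upwards [h (c / 2) (half_pos hc), eventually_gt_atTop 0] with n hn hn0
  rw [div_lt_iff₀ (by exact_mod_cast hn0)]
  nlinarith [(Nat.cast_pos.mpr hn0 : (0 : ℝ) < n)]

def sparseIndex (a : ℕ → ℕ) : ℕ → ℕ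
  | 0 => 0
  | j + 1 => 2 ^ (j + 1) * nseq a (sparseIndex a j) + j + 1

lemma sparseIndex_succ (a : ℕ → ℕ) (j : ℕ) :
    sparseIndex a (j + 1) = 2 ^ (j + 1) * nseq a (sparseIndex a j) + j + 1 := rfl

lemma IsArithSeq.sparseIndex_strictMono (ha : IsArithSeq a) : StrictMono (sparseIndex a) :=
  strictMono_nat_of_lt_succ fun j => by
    have := ha.lt_nseq (sparseIndex a j)
    have := Nat.one_le_two_pow (n := j + 1)
    rw [sparseIndex_succ]
    nlinarith

lemma IsArithSeq.two_pow_mul_nseq_sparseIndex_lt (ha : IsArithSeq a) {m J n : ℕ} (hmJ : m ≤ J)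
    (hlo : nseq a (sparseIndex a (J + 1) - m - 1) < n) :
    2 ^ (J + 1) * nseq a (sparseIndex a J) < n := by
  have := ha.lt_nseq (sparseIndex a (J + 1) - m - 1)
  rw [sparseIndex_succ] at this hlo
  omega

lemma IsArithSeq.ncard_liftSet_image_sub_inter_Iio_le (ha : IsArithSeq a) {m J n : ℕ}
    (hmJ : m ≤ J) (hhi : n ≤ nseq a (sparseIndex a (J + 2) - m - 1)) :
    (liftSet a ((· - m) '' range (sparseIndex a)) ∩ Iio n).ncard ≤
      nseq a (sparseIndex a J) + (ratios a (sparseIndex a (J + 1) - m) - 1) := by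
  refine ncard_liftSet_inter_Iio_le (by rw [sparseIndex_succ]; omega) ?_
  rintro _ ⟨_, ⟨j, rfl⟩, rfl⟩
  beta_reduce
  have hk := ha.sparseIndex_strictMono.monotone
  rcases lt_trichotomy j (J + 1) with hj | rfl | hj
  · exact .inl ((Nat.sub_le _ _).trans (hk (by omega)))
  · exact .inr (.inl rfl)
  · have := hk (show J + 2 ≤ j by omega)
    exact .inr (.inr (hhi.trans (nseq_mono a (by omega))))

/-- if for each `m ≥ 1`, `(Σ_{i=0}^{m-1} (b_{n-i} - 1)) / (Σ_{i=1}^n (b_i - 1)) → 0`,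
then `(a n)` is weakly dli. -/
theorem weaklyDli_of_block_ratio_limit (a : ℕ → ℕ) (ha : IsArithSeq a)
    (h : ∀ m : ℕ, 1 ≤ m →
      Tendsto
        (fun n : ℕ =>
          (∑ i ∈ Finset.range m, ((ratios a (n - i) : ℝ) - 1)) /
            ∑ i ∈ Finset.Icc 1 n, ((ratios a i : ℝ) - 1))
        atTop (𝓝 0)) :
    WeaklyDli a := by
  have hk := ha.sparseIndex_strictMono
  refine ⟨range (sparseIndex a), infinite_range_of_injective hk.injective, fun m => ?_⟩
  have hlim : Tendsto (fun q => ((ratios a q : ℝ) - 1) / ((nseq a q : ℝ) - 1)) atTop (𝓝 0) :=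
    (h 1 le_rfl).congr fun q => by
      rw [Finset.sum_range_one, Nat.sub_zero, ha.sum_Icc_ratios_sub_one]
  refine hasDensity_zero_of_eventually_le fun ε hε => ?_
  have hindex : Tendsto (fun J => sparseIndex a (J + 1) - m) atTop atTop :=
    (tendsto_sub_atTop_nat m).comp (hk.tendsto_atTop.comp (tendsto_add_atTop_nat 1))
  have hpow : ∀ᶠ J : ℕ in atTop, 2 / ε ≤ (2 : ℝ) ^ (J + 1) :=
    ((tendsto_pow_atTop_atTop_of_one_lt one_lt_two).comp
      (tendsto_add_atTop_nat 1)).eventually_ge_atTop _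
  obtain ⟨j₀, hj₀⟩ := eventually_atTop.1 <| (eventually_ge_atTop m).and <|
    hpow.and (hindex.eventually (ha.eventually_ratios_sub_one_le hlim (half_pos hε)))
  set start : ℕ → ℕ := fun j => nseq a (sparseIndex a j - m - 1)
  have hstart : Tendsto start atTop atTop :=
    ha.tendsto_nseq.comp <|
      (tendsto_sub_atTop_nat 1).comp ((tendsto_sub_atTop_nat m).comp hk.tendsto_atTop)
  have hmono : Monotone start := fun i j hij => nseq_mono a (by have := hk.monotone hij; omega)
  filter_upwards [eventually_gt_atTop (start (j₀ + 1))] with n hn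
  obtain ⟨J, hJ, hlo, hhi⟩ := hmono.exists_lt_le_succ hstart hn
  obtain ⟨J, rfl⟩ := Nat.exists_eq_add_one_of_ne_zero (by omega : J ≠ 0)
  obtain ⟨hmJ, hpowJ, hratio⟩ := hj₀ J (by omega)
  have hcount : ((liftSet a ((· - m) '' range (sparseIndex a)) ∩ Iio n).ncard : ℝ) ≤ _ :=
    Nat.cast_le.2 (ha.ncard_liftSet_image_sub_inter_Iio_le hmJ hhi)
  have hfirst : (2 : ℝ) ^ (J + 1) * nseq a (sparseIndex a J) < n := by
    exact_mod_cast ha.two_pow_mul_nseq_sparseIndex_lt hmJ hlo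
  have hlo' : (nseq a (sparseIndex a (J + 1) - m - 1) : ℝ) < n := by exact_mod_cast hlo
  rw [div_le_iff₀ hε] at hpowJ
  push_cast at hcount
  nlinarith [Nat.cast_nonneg (α := ℝ) (nseq a (sparseIndex a J))]
end
end

section
/- Let (a_n) be an arithmetic sequence and A ⊆ ℕ a set that is not b-bounded and satisfies d̄(L(A)) > 0. If d(L(A')) = 0 for every b-bounded subset A' of A, then there exists a b-divergent set B ⊆ A such that d(L(A \ B)) = 0. -/
open Filter Topology Set

noncomputable section

/-!
Put `A_M = {n ∈ A | b_n ≤ M}`; every `L(A_M)` has density zero and `L(A_M)` increases with `M`.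
Choose thresholds `N_0 < N_1 < ⋯` with `|L(A_M) ∩ [0, n)| < n / (M + 1)` for `n ≥ N_M`, and
let `C = ⋃_M (A_M \ [0, N_M))`. For `N_M ≤ n < N_{M+1}` the set `L(C) ∩ [0, n)` lies in
`L(A_M)`, because an index `k` only lifts to integers `≥ k`; hence `L(C)` has density zero.
On the other hand `B = A \ C` meets each `A_M` inside `[0, N_M)`, so `B` is b-divergent,
and `A \ B = C`.
-/

theorem ncard_inter_Iio_div_le_of_subset {S T : Set ℕ} (hST : S ⊆ T) (n : ℕ) :
    ((S ∩ Iio n).ncard : ℝ) / n ≤ ((T ∩ Iio n).ncard : ℝ) / n :=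
  div_le_div_of_nonneg_right (by
    exact_mod_cast ncard_le_ncard (inter_subset_inter_left _ hST)
      ((finite_Iio n).subset inter_subset_right)) n.cast_nonneg

theorem hasDensity_zero_of_subset {S T : Set ℕ} (hT : HasDensity T 0) (hST : S ⊆ T) :
    HasDensity S 0 :=
  squeeze_zero (fun _ => by positivity) (ncard_inter_Iio_div_le_of_subset hST) hT

theorem exists_hasDensity_zero_iUnion_diff_Iio {D : ℕ → Set ℕ} (hD : Monotone D)
    (h : ∀ M, HasDensity (D M) 0) :
    ∃ N : ℕ → ℕ, HasDensity (⋃ M, D M \ Iio (N M)) 0 := by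
  have hsmall : ∀ M, ∀ᶠ k in atTop, ∀ n ≥ k,
      ((D M ∩ Iio n).ncard : ℝ) / n < 1 / (M + 1) := fun M =>
    eventually_forall_ge_atTop.2 <| (h M).eventually (gt_mem_nhds (by positivity))
  obtain ⟨N, hN, hNsmall⟩ := extraction_forall_of_eventually hsmall
  refine ⟨N, tendsto_order.2 ⟨fun ε hε => Eventually.of_forall fun n => hε.trans_le
    (by positivity), fun ε hε => ?_⟩⟩
  obtain ⟨M₀, hM₀⟩ := exists_nat_one_div_lt hε
  filter_upwards [eventually_ge_atTop (N M₀)] with n hn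
  obtain ⟨M, hMn, hnM⟩ := hN.exists_between_of_tendsto_atTop hN.tendsto_atTop
    (x := n + 1) (by have := hN.monotone (Nat.zero_le M₀); omega)
  have hM₀M : M₀ ≤ M := by
    by_contra! hlt
    have := hN.monotone (show M + 1 ≤ M₀ from hlt)
    omega
  have hcover : (⋃ j, D j \ Iio (N j)) ∩ Iio n ⊆ D M ∩ Iio n := by
    rintro x ⟨hx, hxn⟩
    obtain ⟨j, hxj, hjx⟩ := mem_iUnion.1 hx
    have hjM : j ≤ M := by
      by_contra! hlt
      have := hN.monotone (show M + 1 ≤ j from hlt)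
      simp only [mem_Iio, not_lt] at hjx hxn
      omega
    exact ⟨hD hjM hxj, hxn⟩
  calc (((⋃ j, D j \ Iio (N j)) ∩ Iio n).ncard : ℝ) / n
      ≤ ((D M ∩ Iio n).ncard : ℝ) / n := by
        simpa only [inter_self, inter_assoc] using
          ncard_inter_Iio_div_le_of_subset hcover n
    _ < 1 / (M + 1) := hNsmall M n (by omega)
    _ ≤ 1 / (M₀ + 1) := by gcongr
    _ < ε := hM₀

namespace IsArithSeq

variable {a : ℕ → ℕ}

theorem pos_s11 (ha : IsArithSeq a) (n : ℕ) : 0 < a n := by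
  have := (strictMono_nat_of_lt_succ ha.2.1).monotone (Nat.zero_le n)
  rw [ha.1] at this
  omega

theorem two_le_ratios_s11 (ha : IsArithSeq a) (k : ℕ) : 2 ≤ ratios a (k + 1) := by
  obtain ⟨c, hc⟩ := ha.2.2 k
  have hk := ha.pos_s11 k
  have hlt := ha.2.1 k
  rw [hc] at hlt
  have hc2 : 2 ≤ c := by
    by_contra! h
    interval_cases c <;> simp at hlt
  simpa [ratios, hc, Nat.mul_div_cancel_left c hk] using hc2

theorem lt_nseq_s11 (ha : IsArithSeq a) (k : ℕ) : k < nseq a k := by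
  induction k with
  | zero => simp [nseq]
  | succ k ih =>
    have := ha.two_le_ratios_s11 k
    simp only [nseq]
    omega

theorem liftSet_diff_Iio_subset (ha : IsArithSeq a) (S : Set ℕ) (N : ℕ) :
    liftSet a (S \ Iio N) ⊆ liftSet a S \ Iio N := by
  intro x hx
  obtain ⟨k, ⟨hkS, hkN⟩, hxk⟩ := mem_iUnion₂.1 hx
  have := ha.lt_nseq_s11 (k - 1)
  have := hxk.1
  simp only [mem_Iio, not_lt] at hkN
  exact ⟨mem_iUnion₂.2 ⟨k, hkS, hxk⟩, fun hxN : x < N => by omega⟩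

end IsArithSeq

theorem liftSet_mono (a : ℕ → ℕ) : Monotone (liftSet a) :=
  fun _ _ h => biUnion_subset_biUnion_left h

theorem liftSet_iUnion (a : ℕ → ℕ) (S : ℕ → Set ℕ) :
    liftSet a (⋃ M, S M) = ⋃ M, liftSet a (S M) :=
  biUnion_iUnion S _

theorem exists_bDivergent_subset_general (a : ℕ → ℕ) (ha : IsArithSeq a) (A : Set ℕ)
    (hsub : ∀ A' ⊆ A, (∃ M : ℕ, ∀ n ∈ A', ratios a n ≤ M) → HasDensity (liftSet a A') 0) :
    ∃ B ⊆ A, (∀ M : ℕ, {n ∈ B | ratios a n ≤ M}.Finite) ∧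
      HasDensity (liftSet a (A \ B)) 0 := by
  set D : ℕ → Set ℕ := fun M => {n ∈ A | ratios a n ≤ M}
  have hD : Monotone D := fun _ _ hMM' _ hn => ⟨hn.1, hn.2.trans hMM'⟩
  obtain ⟨N, hN⟩ := exists_hasDensity_zero_iUnion_diff_Iio ((liftSet_mono a).comp hD)
    fun M => hsub (D M) (fun _ hn => hn.1) ⟨M, fun _ hn => hn.2⟩
  set C := ⋃ M, D M \ Iio (N M)
  have hCA : C ⊆ A := iUnion_subset fun M _ hn => hn.1.1
  refine ⟨A \ C, sdiff_subset, fun M => (finite_Iio (N M)).subset ?_, ?_⟩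
  · rintro n ⟨⟨hnA, hnC⟩, hnM⟩
    by_contra hn
    exact hnC (mem_iUnion.2 ⟨M, ⟨hnA, hnM⟩, hn⟩)
  · rw [sdiff_sdiff_cancel_left hCA]
    refine hasDensity_zero_of_subset hN ?_
    rw [liftSet_iUnion]
    exact iUnion_mono fun M => ha.liftSet_diff_Iio_subset (D M) (N M)

/-- if `A` is not b-bounded with `d̄(L(A)) > 0`, and `d(L(A')) = 0` for every
b-bounded `A' ⊆ A`, then there is a b-divergent `B ⊆ A` with `d(L(A \ B)) = 0`. -/
theorem exists_bDivergent_subset (a : ℕ → ℕ) (ha : IsArithSeq a) (A : Set ℕ)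
    (hnb : ¬ ∃ M : ℕ, ∀ n ∈ A, ratios a n ≤ M)
    (hud : 0 < upperDensity (liftSet a A))
    (hsub : ∀ A' ⊆ A, (∃ M : ℕ, ∀ n ∈ A', ratios a n ≤ M) → HasDensity (liftSet a A') 0) :
    ∃ B ⊆ A, (∀ M : ℕ, {n ∈ B | ratios a n ≤ M}.Finite) ∧
      HasDensity (liftSet a (A \ B)) 0 :=
  exists_bDivergent_subset_general a ha A hsub
end
end
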